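/- Let β₁, β₂ : [0,1] → ℝ be continuous and let k₁, k₂ be the continuous solutions of the backstepping kernel equations kᵢ(x) = −βᵢ(x) + ∫₀ˣ βᵢ(x−y) kᵢ(y) dy for i = 1, 2. Then for all x ∈ [0,1], |k₁(x) − k₂(x)| ≤ (1 + ‖β₂‖_∞ e^{‖β₂‖_∞}) e^{‖β₁‖_∞ x} ‖β₁ − β₂‖_∞. -/
import Mathlib


open MeasureTheory

/-- supremum norm on C⁰[0,1] -/
noncomputable def supNorm (f : ℝ → ℝ) : ℝ := sSup ((fun x => |f x|) '' Set.Icc 0 1)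

lemma abs_le_supNorm {f : ℝ → ℝ} (hf : ContinuousOn f (Set.Icc 0 1)) {x : ℝ}
    (hx : x ∈ Set.Icc (0:ℝ) 1) : |f x| ≤ supNorm f := by
  have hbdd : BddAbove ((fun x => |f x|) '' Set.Icc 0 1) :=
    (isCompact_Icc.image_of_continuousOn hf.abs).bddAbove
  exact le_csSup hbdd ⟨x, hx, rfl⟩

lemma supNorm_nonneg {f : ℝ → ℝ} (hf : ContinuousOn f (Set.Icc 0 1)) : 0 ≤ supNorm f :=
  le_trans (abs_nonneg (f 0)) (abs_le_supNorm hf (by norm_num))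

/-- Integral-form Grönwall inequality on `[0,1]`. -/
lemma gronwall_int (f : ℝ → ℝ) (hf : Continuous f) {A B : ℝ} (hB : 0 ≤ B)
    (h : ∀ x ∈ Set.Icc (0:ℝ) 1, |f x| ≤ A + B * ∫ y in (0:ℝ)..x, |f y|) :
    ∀ x ∈ Set.Icc (0:ℝ) 1, |f x| ≤ A * Real.exp (B * x) := by
  have habs : Continuous fun y => |f y| := hf.abs
  set F : ℝ → ℝ := fun x => ∫ y in (0:ℝ)..x, |f y| with hF
  have hFnn : ∀ x, 0 ≤ x → 0 ≤ F x := fun x hx =>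
    intervalIntegral.integral_nonneg hx (fun y _ => abs_nonneg _)
  have hF' : ∀ x, HasDerivAt F (|f x|) x := fun x =>
    intervalIntegral.integral_hasDerivAt_right (habs.intervalIntegrable 0 x)
      habs.aestronglyMeasurable.stronglyMeasurableAtFilter habs.continuousAt
  have key : ∀ x ∈ Set.Icc (0:ℝ) 1, ‖F x‖ ≤ gronwallBound 0 B A (x - 0) := by
    apply norm_le_gronwallBound_of_norm_deriv_right_le
      (f' := fun x => |f x|)
      ((continuous_iff_continuousAt.2 fun x => (hF' x).continuousAt).continuousOn)
      (fun x _ => (hF' x).hasDerivWithinAt)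
    · simp [hF, intervalIntegral.integral_same]
    · intro x hx
      have h1 := h x ⟨hx.1, le_of_lt hx.2⟩
      have h2 : ‖F x‖ = F x := Real.norm_of_nonneg (hFnn x hx.1)
      rw [Real.norm_eq_abs, abs_abs, h2]
      linarith
  intro x hx
  have h1 := h x hx
  have h2 := key x hx
  rw [Real.norm_of_nonneg (hFnn x hx.1)] at h2
  rcases eq_or_ne B 0 with hB0 | hB0
  · subst hB0; simpa using h1
  · rw [sub_zero, gronwallBound_of_K_ne_0 hB0] at h2
    have : A + B * F x ≤ A + B * (0 * Real.exp (B * x) + A / B * (Real.exp (B * x) - 1)) := by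
      nlinarith [hB.lt_of_ne' hB0]
    calc |f x| ≤ A + B * F x := h1
      _ ≤ A + B * (0 * Real.exp (B * x) + A / B * (Real.exp (B * x) - 1)) := this
      _ = A * Real.exp (B * x) := by field_simp; ring

lemma abs_int_le (φ ψ : ℝ → ℝ) {x : ℝ} (hx : 0 ≤ x) (hφ : ContinuousOn φ (Set.Icc 0 x))
    (hψint : IntervalIntegrable ψ volume 0 x) (hle : ∀ y ∈ Set.Icc 0 x, |φ y| ≤ ψ y) :
    |∫ y in (0:ℝ)..x, φ y| ≤ ∫ y in (0:ℝ)..x, ψ y :=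
  (intervalIntegral.abs_integral_le_integral_abs hx).trans
    (intervalIntegral.integral_mono_on hx (hφ.abs.intervalIntegrable_of_Icc hx) hψint hle)

lemma conv_continuousOn {β k : ℝ → ℝ} (hβ : ContinuousOn β (Set.Icc 0 1))
    (hk : ContinuousOn k (Set.Icc 0 1)) {x : ℝ} (hx : x ∈ Set.Icc (0:ℝ) 1) :
    ContinuousOn (fun y => β (x - y) * k y) (Set.Icc 0 x) := by
  have hsub : Set.Icc (0:ℝ) x ⊆ Set.Icc 0 1 := Set.Icc_subset_Icc le_rfl hx.2
  have hmaps : ∀ y ∈ Set.Icc (0:ℝ) x, x - y ∈ Set.Icc (0:ℝ) 1 := fun y hy =>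
    ⟨by linarith [hy.2], by linarith [hy.1, hx.2]⟩
  exact (hβ.comp ((continuous_const.sub continuous_id).continuousOn) hmaps).mul (hk.mono hsub)

/-- pointwise Lipschitz-type bound on the difference of backstepping kernels:
|k₁(x) − k₂(x)| ≤ (1 + ‖β₂‖_∞ e^{‖β₂‖_∞}) e^{‖β₁‖_∞ x} ‖β₁ − β₂‖_∞. -/
theorem kernel_difference_pointwise_bound
    (β₁ β₂ k₁ k₂ : ℝ → ℝ)
    (hβ₁ : ContinuousOn β₁ (Set.Icc 0 1))
    (hβ₂ : ContinuousOn β₂ (Set.Icc 0 1))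
    (hk₁ : ContinuousOn k₁ (Set.Icc 0 1))
    (hk₂ : ContinuousOn k₂ (Set.Icc 0 1))
    (heq₁ : ∀ x ∈ Set.Icc (0:ℝ) 1,
      k₁ x = -β₁ x + ∫ y in (0:ℝ)..x, β₁ (x - y) * k₁ y)
    (heq₂ : ∀ x ∈ Set.Icc (0:ℝ) 1,
      k₂ x = -β₂ x + ∫ y in (0:ℝ)..x, β₂ (x - y) * k₂ y) :
    ∀ x ∈ Set.Icc (0:ℝ) 1,
      |k₁ x - k₂ x| ≤
        (1 + supNorm β₂ * Real.exp (supNorm β₂)) * Real.exp (supNorm β₁ * x) *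
          supNorm (fun x => β₁ x - β₂ x) := by
  set C₁ := supNorm β₁ with hC₁
  set C₂ := supNorm β₂ with hC₂
  set D := supNorm (fun x => β₁ x - β₂ x) with hD
  have hΔ : ContinuousOn (fun x => β₁ x - β₂ x) (Set.Icc 0 1) := hβ₁.sub hβ₂
  have hC₁0 : 0 ≤ C₁ := supNorm_nonneg hβ₁
  have hC₂0 : 0 ≤ C₂ := supNorm_nonneg hβ₂
  have hD0 : 0 ≤ D := supNorm_nonneg hΔ
  have hΔle : ∀ z ∈ Set.Icc (0:ℝ) 1, |β₁ z - β₂ z| ≤ D := fun z hz => abs_le_supNorm hΔ hz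
  have hmaps : ∀ x ∈ Set.Icc (0:ℝ) 1, ∀ y ∈ Set.Icc (0:ℝ) x, x - y ∈ Set.Icc (0:ℝ) 1 :=
    fun x hx y hy => ⟨by linarith [hy.2], by linarith [hy.1, hx.2]⟩
  have hsub : ∀ x ∈ Set.Icc (0:ℝ) 1, Set.Icc (0:ℝ) x ⊆ Set.Icc 0 1 :=
    fun x hx => Set.Icc_subset_Icc le_rfl hx.2
  -- extension of k₂
  set g₂ : ℝ → ℝ := Set.IccExtend zero_le_one ((Set.Icc (0:ℝ) 1).restrict k₂) with hg₂
  have hg₂c : Continuous g₂ := (continuousOn_iff_continuous_restrict.1 hk₂).Icc_extend'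
  have hg₂eq : ∀ x ∈ Set.Icc (0:ℝ) 1, g₂ x = k₂ x := fun x hx => by
    rw [hg₂, Set.IccExtend_of_mem _ _ hx]; rfl
  -- step 1 : bound on k₂
  have hbk₂ : ∀ x ∈ Set.Icc (0:ℝ) 1, |k₂ x| ≤ C₂ * Real.exp C₂ := by
    have h1 : ∀ x ∈ Set.Icc (0:ℝ) 1, |g₂ x| ≤ C₂ + C₂ * ∫ y in (0:ℝ)..x, |g₂ y| := by
      intro x hx
      have hint : IntervalIntegrable (fun y => C₂ * |k₂ y|) volume 0 x :=
        (continuousOn_const.mul (hk₂.mono (hsub x hx)).abs).intervalIntegrable_of_Icc hx.1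
      have key : |∫ y in (0:ℝ)..x, β₂ (x - y) * k₂ y| ≤ ∫ y in (0:ℝ)..x, C₂ * |k₂ y| := by
        apply abs_int_le _ _ hx.1 (conv_continuousOn hβ₂ hk₂ hx) hint
        intro y hy
        rw [abs_mul]
        exact mul_le_mul_of_nonneg_right (abs_le_supNorm hβ₂ (hmaps x hx y hy)) (abs_nonneg _)
      have hcongr : (∫ y in (0:ℝ)..x, |g₂ y|) = ∫ y in (0:ℝ)..x, |k₂ y| := by
        apply intervalIntegral.integral_congr
        intro y hy
        rw [Set.uIcc_of_le hx.1] at hy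
        exact congrArg abs (hg₂eq y (hsub x hx hy))
      rw [hg₂eq x hx, hcongr]
      calc |k₂ x| = |-β₂ x + ∫ y in (0:ℝ)..x, β₂ (x - y) * k₂ y| := by rw [heq₂ x hx]
        _ ≤ |β₂ x| + |∫ y in (0:ℝ)..x, β₂ (x - y) * k₂ y| := by
              rw [← abs_neg (β₂ x)] ; exact abs_add_le _ _
        _ ≤ C₂ + ∫ y in (0:ℝ)..x, C₂ * |k₂ y| := add_le_add (abs_le_supNorm hβ₂ hx) key
        _ = C₂ + C₂ * ∫ y in (0:ℝ)..x, |k₂ y| := by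
              rw [intervalIntegral.integral_const_mul]
    intro x hx
    have := gronwall_int g₂ hg₂c hC₂0 h1 x hx
    rw [hg₂eq x hx] at this
    calc |k₂ x| ≤ C₂ * Real.exp (C₂ * x) := this
      _ ≤ C₂ * Real.exp C₂ := by
          apply mul_le_mul_of_nonneg_left _ hC₂0
          exact Real.exp_le_exp.2 (by nlinarith [hx.1, hx.2])
  set M := C₂ * Real.exp C₂ with hM
  have hM0 : 0 ≤ M := mul_nonneg hC₂0 (Real.exp_pos _).le
  -- extension of k₁ - k₂
  set d : ℝ → ℝ := fun x => k₁ x - k₂ x with hd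
  have hdc : ContinuousOn d (Set.Icc 0 1) := hk₁.sub hk₂
  set g : ℝ → ℝ := Set.IccExtend zero_le_one ((Set.Icc (0:ℝ) 1).restrict d) with hg
  have hgc : Continuous g := (continuousOn_iff_continuous_restrict.1 hdc).Icc_extend'
  have hgeq : ∀ x ∈ Set.Icc (0:ℝ) 1, g x = d x := fun x hx => by
    rw [hg, Set.IccExtend_of_mem _ _ hx]; rfl
  -- step 2 : bound on d
  have h2 : ∀ x ∈ Set.Icc (0:ℝ) 1, |g x| ≤ D * (1 + M) + C₁ * ∫ y in (0:ℝ)..x, |g y| := by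
    intro x hx
    have hi₁ : IntervalIntegrable (fun y => β₁ (x - y) * k₁ y) volume 0 x :=
      (conv_continuousOn hβ₁ hk₁ hx).intervalIntegrable_of_Icc hx.1
    have hi₂ : IntervalIntegrable (fun y => β₂ (x - y) * k₂ y) volume 0 x :=
      (conv_continuousOn hβ₂ hk₂ hx).intervalIntegrable_of_Icc hx.1
    have hcd : ContinuousOn (fun y => β₁ (x - y) * d y) (Set.Icc 0 x) :=
      conv_continuousOn hβ₁ hdc hx
    have hcΔ : ContinuousOn (fun y => (β₁ (x - y) - β₂ (x - y)) * k₂ y) (Set.Icc 0 x) := by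
      have := conv_continuousOn (β := fun z => β₁ z - β₂ z) hΔ hk₂ hx
      simpa using this
    have hiA : IntervalIntegrable (fun y => β₁ (x - y) * d y) volume 0 x :=
      hcd.intervalIntegrable_of_Icc hx.1
    have hiB : IntervalIntegrable (fun y => (β₁ (x - y) - β₂ (x - y)) * k₂ y) volume 0 x :=
      hcΔ.intervalIntegrable_of_Icc hx.1
    have hsplit : d x = -(β₁ x - β₂ x) + ((∫ y in (0:ℝ)..x, β₁ (x - y) * d y)
        + ∫ y in (0:ℝ)..x, (β₁ (x - y) - β₂ (x - y)) * k₂ y) := by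
      show k₁ x - k₂ x = -(β₁ x - β₂ x) + ((∫ y in (0:ℝ)..x, β₁ (x - y) * (k₁ y - k₂ y))
        + ∫ y in (0:ℝ)..x, (β₁ (x - y) - β₂ (x - y)) * k₂ y)
      have hiA' : IntervalIntegrable (fun y => β₁ (x - y) * (k₁ y - k₂ y)) volume 0 x := hiA
      have e1 : (∫ y in (0:ℝ)..x, β₁ (x - y) * k₁ y) - ∫ y in (0:ℝ)..x, β₂ (x - y) * k₂ y
          = (∫ y in (0:ℝ)..x, β₁ (x - y) * (k₁ y - k₂ y))
            + ∫ y in (0:ℝ)..x, (β₁ (x - y) - β₂ (x - y)) * k₂ y := by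
        rw [← intervalIntegral.integral_sub hi₁ hi₂, ← intervalIntegral.integral_add hiA' hiB]
        exact intervalIntegral.integral_congr (fun y _ => by ring)
      rw [heq₁ x hx, heq₂ x hx]
      linarith [e1]
    have keyA : |∫ y in (0:ℝ)..x, β₁ (x - y) * d y| ≤ ∫ y in (0:ℝ)..x, C₁ * |d y| := by
      apply abs_int_le _ _ hx.1 hcd
        (((continuousOn_const.mul (hdc.mono (hsub x hx)).abs)).intervalIntegrable_of_Icc hx.1)
      intro y hy
      rw [abs_mul]
      exact mul_le_mul_of_nonneg_right (abs_le_supNorm hβ₁ (hmaps x hx y hy)) (abs_nonneg _)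
    have keyB : |∫ y in (0:ℝ)..x, (β₁ (x - y) - β₂ (x - y)) * k₂ y|
        ≤ ∫ _y in (0:ℝ)..x, D * M := by
      apply abs_int_le _ _ hx.1 hcΔ (intervalIntegrable_const)
      intro y hy
      rw [abs_mul]
      exact mul_le_mul (hΔle _ (hmaps x hx y hy)) (hbk₂ y (hsub x hx hy)) (abs_nonneg _) hD0
    have hcongr : (∫ y in (0:ℝ)..x, |g y|) = ∫ y in (0:ℝ)..x, |d y| := by
      apply intervalIntegral.integral_congr
      intro y hy
      rw [Set.uIcc_of_le hx.1] at hy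
      exact congrArg abs (hgeq y (hsub x hx hy))
    rw [hgeq x hx, hcongr]
    have hBconst : (∫ _y in (0:ℝ)..x, D * M) = x * (D * M) := by
      rw [intervalIntegral.integral_const, smul_eq_mul, sub_zero]
    calc |d x| ≤ |β₁ x - β₂ x| + (|∫ y in (0:ℝ)..x, β₁ (x - y) * d y|
          + |∫ y in (0:ℝ)..x, (β₁ (x - y) - β₂ (x - y)) * k₂ y|) := by
          rw [hsplit]
          refine (abs_add_le _ _).trans (add_le_add (le_of_eq (abs_neg _)) (abs_add_le _ _))
      _ ≤ D + ((∫ y in (0:ℝ)..x, C₁ * |d y|) + x * (D * M)) := by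
          rw [← hBconst]
          exact add_le_add (hΔle x hx) (add_le_add keyA keyB)
      _ ≤ D * (1 + M) + C₁ * ∫ y in (0:ℝ)..x, |d y| := by
          rw [intervalIntegral.integral_const_mul]
          nlinarith [hx.1, hx.2, mul_nonneg hD0 hM0]
  intro x hx
  have := gronwall_int g hgc hC₁0 h2 x hx
  rw [hgeq x hx] at this
  calc |k₁ x - k₂ x| = |d x| := rfl
    _ ≤ D * (1 + M) * Real.exp (C₁ * x) := this
    _ = (1 + C₂ * Real.exp C₂) * Real.exp (C₁ * x) * D := by rw [hM]; ring
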